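/- Let I be an order ideal in the root poset of a finite crystallographic root system Φ, and α a simple root. If the order filter F_I(α) = {γ ∈ I : γ ≥ α} is an order filter of I containing two incomparable elements, then F_I(α) contains an entire 2-flat of I (a set of the form I ∩ span{γ, γ'} of rank 2). Equivalently, if some order filter of I generated by a minimal element contains no entire 2-flat, then it is a chain. -/

import Mathlib

open scoped RealInnerProductSpace

/-- A finite crystallographic (reduced) root system in a Euclidean space `V`. -/
structure RootSystemData (V : Type*) [NormedAddCommGroup V] [InnerProductSpace ℝ V] where
  Φ : Set V
  finite : Φ.Finite
  nonzero : ∀ γ ∈ Φ, γ ≠ 0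
  neg_mem : ∀ γ ∈ Φ, -γ ∈ Φ
  reflect_mem : ∀ α ∈ Φ, ∀ β ∈ Φ, β - (2 * ⟪α, β⟫ / ⟪α, α⟫) • α ∈ Φ
  crystallographic : ∀ α ∈ Φ, ∀ β ∈ Φ, ∃ n : ℤ, 2 * ⟪α, β⟫ / ⟪α, α⟫ = (n : ℝ)
  reduced : ∀ γ ∈ Φ, ∀ t : ℝ, t • γ ∈ Φ → t = 1 ∨ t = -1

/-- A base (system of simple roots) for a root system: the simple roots form a basis of `V`
and every root has coordinates that are all nonnegative integers or all nonpositive integers. -/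
structure RootBase {V : Type*} [NormedAddCommGroup V] [InnerProductSpace ℝ V]
    (R : RootSystemData V) (ι : Type*) [Fintype ι] where
  b : Module.Basis ι ℝ V
  simple_mem : ∀ i, b i ∈ R.Φ
  coord_sign : ∀ γ ∈ R.Φ, (∀ i, 0 ≤ b.repr γ i) ∨ (∀ i, b.repr γ i ≤ 0)
  coord_int : ∀ γ ∈ R.Φ, ∀ i, ∃ n : ℤ, b.repr γ i = (n : ℝ)

namespace RootBase

variable {V : Type*} [NormedAddCommGroup V] [InnerProductSpace ℝ V]
  {R : RootSystemData V} {ι : Type*} [Fintype ι]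

/-- `γ` is a positive root. -/
def IsPos (B : RootBase R ι) (γ : V) : Prop := γ ∈ R.Φ ∧ ∀ i, 0 ≤ B.b.repr γ i

/-- The set of positive roots. -/
def Pos (B : RootBase R ι) : Set V := {γ | B.IsPos γ}

/-- The root poset order: coordinatewise comparison over the simple roots. -/
def rle (B : RootBase R ι) (γ γ' : V) : Prop := ∀ i, B.b.repr γ i ≤ B.b.repr γ' i

end RootBase

/-- All roots have the same length. -/
def RootSystemData.SimplyLaced {V : Type*} [NormedAddCommGroup V] [InnerProductSpace ℝ V]
    (R : RootSystemData V) : Prop := ∀ γ ∈ R.Φ, ∀ γ' ∈ R.Φ, ⟪γ, γ⟫ = ⟪γ', γ'⟫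

/-!
Let `U` be the span of two incomparable roots `γ, γ'` of `F`. If a positive root `δ ∈ U` had no
`α_i` component, the positive roots in `U` would form a rank two system with simple roots `δ` and
some `τ` (the positive root of `U` with the largest `α_i` share), and `γ, γ'` would be incomparable
positive roots of it other than `δ`. In a rank two system with simple roots `σ, τ` this is
impossible: reflecting in `σ` and in `τ` confines two such roots to the cone between `s_σ τ` and
`s_τ σ`, whose angle is at most `π / 2` because the Cartan integers of `σ, τ` have product at most
`3`. So the two roots would have positive inner product, their difference would be a root, and
they would be comparable. Hence every positive root of `U`, in particular every element of
`I ∩ U`, lies above `α_i`.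
-/

open Module

section LinearAlgebra

variable {K V : Type*} [Field K] [AddCommGroup V] [Module K V]

theorem finrank_span_pair_eq_two {x y : V} (h : LinearIndependent K ![x, y]) :
    finrank K (Submodule.span K ({x, y} : Set V)) = 2 := by
  have hrange : ({x, y} : Set V) = Set.range ![x, y] := by
    simp [Matrix.range_cons, Matrix.range_empty, Set.pair_comm]
  rw [hrange, finrank_span_eq_card h, Fintype.card_fin]

theorem exists_smul_eq_of_finrank_eq_two {U : Submodule K V} (hU : finrank K U = 2)
    (f : V →ₗ[K] K) {x y z : V} (hxU : x ∈ U) (hyU : y ∈ U) (hzU : z ∈ U) (hx : x ≠ 0)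
    (hfx : f x = 0) (hfy : f y ≠ 0) (hfz : f z = 0) : ∃ a : K, z = a • x := by
  have hxy : LinearIndependent K ![x, y] :=
    (LinearIndependent.pair_iff' hx).2 fun a hax => hfy (by rw [← hax, map_smul, hfx, smul_zero])
  have : FiniteDimensional K U := .of_finrank_pos (by omega)
  have hspan : Submodule.span K {x, y} = U :=
    Submodule.eq_of_le_of_finrank_eq (Submodule.span_le.2 (Set.pair_subset hxU hyU))
      (by rw [finrank_span_pair_eq_two hxy, hU])
  obtain ⟨a, c, rfl⟩ := Submodule.mem_span_pair.1 (hspan ▸ hzU)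
  have hc : c = 0 := by simpa [hfx, hfy] using hfz
  exact ⟨a, by simp [hc]⟩

end LinearAlgebra

section InnerProductSpace

variable {V : Type*} [NormedAddCommGroup V] [InnerProductSpace ℝ V]

theorem real_inner_mul_inner_self_lt {x y : V} (h : LinearIndependent ℝ ![x, y]) :
    ⟪x, y⟫ * ⟪x, y⟫ < ⟪x, x⟫ * ⟪y, y⟫ := by
  have hx : x ≠ 0 := h.ne_zero 0
  have hy : y ≠ 0 := h.ne_zero 1
  have hne : |⟪x, y⟫| ≠ ‖x‖ * ‖y‖ := fun heq => by
    obtain ⟨r, -, hr⟩ :=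
      (norm_inner_eq_norm_iff (𝕜 := ℝ) hx hy).1 (by rwa [Real.norm_eq_abs])
    exact (LinearIndependent.pair_iff' hx).1 h r hr.symm
  have hlt := lt_of_le_of_ne (abs_real_inner_le_norm x y) hne
  rw [real_inner_self_eq_norm_mul_norm, real_inner_self_eq_norm_mul_norm]
  nlinarith [abs_nonneg ⟪x, y⟫, abs_mul_abs_self ⟪x, y⟫]

theorem cartan_mul_lt_four {x y : V} (hxy : LinearIndependent ℝ ![x, y]) {m n : ℤ}
    (hm : m * ⟪x, x⟫ = 2 * ⟪x, y⟫) (hn : n * ⟪y, y⟫ = 2 * ⟪x, y⟫) : m * n < 4 := by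
  have hCS := real_inner_mul_inner_self_lt hxy
  have hpos : 0 < ⟪x, x⟫ * ⟪y, y⟫ :=
    mul_pos (real_inner_self_pos.2 (hxy.ne_zero 0)) (real_inner_self_pos.2 (hxy.ne_zero 1))
  have hmn : ((m * n : ℤ) : ℝ) * (⟪x, x⟫ * ⟪y, y⟫) = 4 * (⟪x, y⟫ * ⟪x, y⟫) := by
    push_cast
    linear_combination (n * ⟪y, y⟫) * hm + 2 * ⟪x, y⟫ * hn
  have : ((m * n : ℤ) : ℝ) < 4 := by nlinarith
  exact_mod_cast this

theorem cartan_mul_inner_eq {σ τ : V} {m n : ℝ} (hm : m * ⟪σ, σ⟫ = 2 * ⟪σ, τ⟫)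
    (hn : n * ⟪τ, τ⟫ = 2 * ⟪σ, τ⟫) (p q p' q' : ℝ) :
    m * n * ⟪p • σ + q • τ, p' • σ + q' • τ⟫ =
      ⟪σ, τ⟫ * (2 * n * p * p' + 2 * m * q * q' + m * n * (p * q' + p' * q)) := by
  simp only [inner_add_left, inner_add_right, real_inner_smul_left, real_inner_smul_right,
    real_inner_comm σ τ]
  linear_combination (n * p * p') * hm + (m * q * q') * hn

end InnerProductSpace

namespace RootSystemData

variable {V : Type*} [NormedAddCommGroup V] [InnerProductSpace ℝ V] (R : RootSystemData V)

theorem inner_self_pos {x : V} (hx : x ∈ R.Φ) : 0 < ⟪x, x⟫ :=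
  real_inner_self_pos.2 (R.nonzero x hx)

theorem exists_int_sub_smul_mem {x y : V} (hx : x ∈ R.Φ) (hy : y ∈ R.Φ) :
    ∃ n : ℤ, n * ⟪x, x⟫ = 2 * ⟪x, y⟫ ∧ y - (n : ℝ) • x ∈ R.Φ := by
  obtain ⟨n, hn⟩ := R.crystallographic x hx y hy
  refine ⟨n, ?_, hn ▸ R.reflect_mem x hx y hy⟩
  rw [← hn, div_mul_cancel₀ _ (R.inner_self_pos hx).ne']

theorem eq_one_of_smul_mem {x : V} (hx : x ∈ R.Φ) {c : ℝ} (hc : c • x ∈ R.Φ)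
    (hc0 : 0 ≤ c) : c = 1 :=
  (R.reduced x hx c hc).resolve_right (by linarith)

theorem sub_mem_of_inner_pos {x y : V} (hx : x ∈ R.Φ) (hy : y ∈ R.Φ) (hxy : x ≠ y)
    (h : 0 < ⟪x, y⟫) : x - y ∈ R.Φ := by
  by_cases hind : LinearIndependent ℝ ![x, y]
  · obtain ⟨m, hm, hxm⟩ := R.exists_int_sub_smul_mem hy hx
    obtain ⟨n, hn, hyn⟩ := R.exists_int_sub_smul_mem hx hy
    rw [real_inner_comm x y] at hm
    have hm0 : (0 : ℝ) < m := pos_of_mul_pos_left (by linarith) (R.inner_self_pos hy).le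
    have hn0 : (0 : ℝ) < n := pos_of_mul_pos_left (by linarith) (R.inner_self_pos hx).le
    have hmn := cartan_mul_lt_four hind hn hm
    norm_cast at hm0 hn0
    obtain rfl | rfl : n = 1 ∨ m = 1 := by
      by_contra! hne
      nlinarith [(by omega : 2 ≤ n), (by omega : 2 ≤ m)]
    · simpa using R.neg_mem _ hyn
    · simpa using hxm
  · obtain ⟨c, rfl⟩ : ∃ c : ℝ, c • x = y := by
      simpa [LinearIndependent.pair_iff' (R.nonzero x hx)] using hind
    have hc : 0 < c := by
      rw [real_inner_smul_right] at h
      exact pos_of_mul_pos_left h (R.inner_self_pos hx).le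
    exact absurd (by rw [R.eq_one_of_smul_mem hx hy hc.le, one_smul]) hxy

end RootSystemData

-- The integer below is `m n ⟪x, y⟫ / ⟪σ, τ⟫` for `x = p σ + q τ` and `y = p' σ + q' τ`,
-- where `m, n` are the Cartan integers of `σ, τ`.
theorem cartan_pairing_neg {m n p q p' q' : ℤ} (hmn : m * n < 4) (hp' : 1 ≤ p') (hpp' : p' < p)
    (hq : 1 ≤ q) (hqq' : q < q') (hσ : p + m * q ≤ 0) (hσ_eq : p + m * q = 0 → q = 1)
    (hτ : q' + n * p' ≤ 0) (hτ_eq : q' + n * p' = 0 → p' = 1) :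
    m ≤ -1 ∧ 2 * n * p * p' + 2 * m * q * q' + m * n * (p * q' + p' * q) < 0 := by
  have hm : m ≤ -1 := by nlinarith
  have hn : n ≤ -1 := by nlinarith
  refine ⟨hm, ?_⟩
  have hm3 : -3 ≤ m := by nlinarith
  have hn3 : -3 ≤ n := by nlinarith
  rcases hσ.lt_or_eq with hσ | hσ
  · rcases hτ.lt_or_eq with hτ | hτ
    · interval_cases m <;> interval_cases n <;> first | omega | nlinarith
    · obtain rfl := hτ_eq hτ
      interval_cases m <;> interval_cases n <;> omega
  · obtain rfl := hσ_eq hσ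
    interval_cases m <;> interval_cases n <;> omega

namespace RootBase

variable {V : Type*} [NormedAddCommGroup V] [InnerProductSpace ℝ V]
  {R : RootSystemData V} {ι : Type*} [Fintype ι] (B : RootBase R ι)

theorem isPos_or_isPos_neg {x : V} (hx : x ∈ R.Φ) : B.IsPos x ∨ B.IsPos (-x) := by
  rcases B.coord_sign x hx with h | h
  · exact .inl ⟨hx, h⟩
  · exact .inr ⟨R.neg_mem x hx, fun j => by simpa using h j⟩

theorem rle_or_rle_of_sub_mem {x y : V} (h : x - y ∈ R.Φ) : B.rle y x ∨ B.rle x y := by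
  rcases B.coord_sign _ h with h | h
  · exact .inl fun j => by simpa using h j
  · exact .inr fun j => by simpa using h j

theorem inner_nonpos_of_not_rle {x y : V} (hx : x ∈ R.Φ) (hy : y ∈ R.Φ) (hxy : ¬B.rle x y)
    (hyx : ¬B.rle y x) : ⟪x, y⟫ ≤ 0 := by
  by_contra! h
  have hne : x ≠ y := by
    rintro rfl
    exact hxy fun _ => le_rfl
  rcases B.rle_or_rle_of_sub_mem (R.sub_mem_of_inner_pos hx hy hne h) with h | h
  exacts [hyx h, hxy h]

theorem linearIndependent_of_not_rle {x y : V} (hx : B.IsPos x) (hxy : ¬B.rle x y)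
    (hyx : ¬B.rle y x) : LinearIndependent ℝ ![x, y] := by
  refine (LinearIndependent.pair_iff' (R.nonzero x hx.1)).2 fun a hax => ?_
  subst hax
  rcases le_or_gt a 1 with ha | ha
  · exact hyx fun j => by simpa using mul_le_of_le_one_left (hx.2 j) ha
  · exact hxy fun j => by simpa using le_mul_of_one_le_left (hx.2 j) ha.le

theorem coord_eq_zero_or_one_le {x : V} (hx : B.IsPos x) (j : ι) :
    B.b.repr x j = 0 ∨ 1 ≤ B.b.repr x j := by
  obtain ⟨n, hn⟩ := B.coord_int x hx.1 j
  have := hx.2 j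
  rw [hn] at this ⊢
  norm_cast at this ⊢
  omega

theorem rle_basis_iff {x : V} (hx : B.IsPos x) (i : ι) :
    B.rle (B.b i) x ↔ 1 ≤ B.b.repr x i := by
  classical
  refine ⟨fun h => by simpa using h i, fun h j => ?_⟩
  rcases eq_or_ne j i with rfl | hji
  · simpa using h
  · simpa [Finsupp.single_apply, hji.symm] using hx.2 j

noncomputable def height : V →ₗ[ℝ] ℝ := ∑ j, B.b.coord j

theorem height_apply (x : V) : B.height x = ∑ j, B.b.repr x j := by
  simp [height]

theorem height_pos {x : V} (hx : B.IsPos x) : 0 < B.height x := by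
  obtain ⟨j, hj⟩ : ∃ j, B.b.repr x j ≠ 0 := by
    by_contra! h
    exact R.nonzero x hx.1 (B.b.repr.injective (Finsupp.ext (by simpa using h)))
  rw [height_apply]
  exact ((hx.2 j).lt_of_ne hj.symm).trans_le
    (Finset.single_le_sum (fun k _ => hx.2 k) (Finset.mem_univ j))

structure IsConeBasis (U : Submodule ℝ V) (σ τ : V) : Prop where
  left_mem : σ ∈ B.Pos ∩ U
  right_mem : τ ∈ B.Pos ∩ U
  linearIndependent : LinearIndependent ℝ ![σ, τ]
  exists_nonneg : ∀ x ∈ B.Pos ∩ U, ∃ a b : ℝ, 0 ≤ a ∧ 0 ≤ b ∧ x = a • σ + b • τ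

-- `τ` is the positive root of `U` in which the simple root `B.b i` has the largest share.
theorem exists_isConeBasis {U : Submodule ℝ V} (hU : finrank ℝ U = 2) {σ γ : V} (i : ι)
    (hσ : σ ∈ B.Pos ∩ U) (hσi : B.b.repr σ i = 0) (hγ : γ ∈ B.Pos ∩ U)
    (hγi : B.b.repr γ i ≠ 0) : ∃ τ, B.IsConeBasis U σ τ := by
  have hfin : (B.Pos ∩ U).Finite := R.finite.subset fun x hx => hx.1.1
  obtain ⟨τ, hτ, hmax⟩ :=
    Set.exists_max_image _ (fun x => B.b.repr x i / B.height x) hfin ⟨γ, hγ⟩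
  have hτi : 0 < B.b.repr τ i := by
    have hγpos : 0 < B.b.repr γ i / B.height γ :=
      div_pos ((hγ.1.2 i).lt_of_ne hγi.symm) (B.height_pos hγ.1)
    exact (div_pos_iff_of_pos_right (B.height_pos hτ.1)).1 (hγpos.trans_le (hmax γ hγ))
  refine ⟨τ, hσ, hτ, ?_, fun x hx => ?_⟩
  · exact (LinearIndependent.pair_iff' (R.nonzero σ hσ.1.1)).2 fun a ha =>
      hτi.ne' (by simp [← ha, hσi])
  set b := B.b.repr x i / B.b.repr τ i
  obtain ⟨a, ha⟩ := exists_smul_eq_of_finrank_eq_two hU (B.b.coord i) hσ.2 hγ.2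
    (U.sub_mem hx.2 (U.smul_mem b hτ.2)) (R.nonzero σ hσ.1.1) (by simpa using hσi)
    (by simpa using hγi) (by simp [b, hτi.ne'])
  have hxab : x = a • σ + b • τ := by rw [← ha, sub_add_cancel]
  refine ⟨a, b, ?_, div_nonneg (hx.1.2 i) hτi.le, hxab⟩
  have hratio := hmax x hx
  rw [div_le_div_iff₀ (B.height_pos hx.1) (B.height_pos hτ.1)] at hratio
  have hbτ : b * B.height τ ≤ B.height x := by
    rw [div_mul_eq_mul_div, div_le_iff₀ hτi]
    linarith
  have hheight : B.height x = a * B.height σ + b * B.height τ := by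
    rw [hxab, map_add, map_smul, map_smul, smul_eq_mul, smul_eq_mul]
  nlinarith [B.height_pos hσ.1]

namespace IsConeBasis

variable {B} {U : Submodule ℝ V} {σ τ : V}

theorem symm (h : B.IsConeBasis U σ τ) : B.IsConeBasis U τ σ where
  left_mem := h.right_mem
  right_mem := h.left_mem
  linearIndependent := LinearIndependent.pair_symm_iff.1 h.linearIndependent
  exists_nonneg x hx := by
    obtain ⟨a, b, ha, hb, rfl⟩ := h.exists_nonneg x hx
    exact ⟨b, a, hb, ha, add_comm _ _⟩

theorem coeff_nonneg (h : B.IsConeBasis U σ τ) {x : V} (hx : x ∈ B.Pos ∩ U) {a b : ℝ}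
    (hab : x = a • σ + b • τ) : 0 ≤ a ∧ 0 ≤ b := by
  obtain ⟨a', b', ha', hb', rfl⟩ := h.exists_nonneg x hx
  obtain ⟨rfl, rfl⟩ := h.linearIndependent.eq_of_pair hab
  exact ⟨ha', hb'⟩

theorem mem_of_mem_root (h : B.IsConeBasis U σ τ) {x : V} (hx : x ∈ R.Φ) {a b : ℝ}
    (hab : x = a • σ + b • τ) (hb : 0 < b) : x ∈ B.Pos ∩ U := by
  have hxU : x ∈ U := hab ▸ U.add_mem (U.smul_mem a h.left_mem.2) (U.smul_mem b h.right_mem.2)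
  rcases B.isPos_or_isPos_neg hx with hpos | hneg
  · exact ⟨hpos, hxU⟩
  · have := (h.coeff_nonneg ⟨hneg, U.neg_mem hxU⟩ (a := -a) (b := -b) (by rw [hab]; module)).2
    linarith

theorem sub_mem_of_inner_pos (h : B.IsConeBasis U σ τ) {x : V} (hx : x ∈ B.Pos ∩ U)
    {a b : ℝ} (hab : x = a • σ + b • τ) (hb : 0 < b) (hxσ : 0 < ⟪x, σ⟫) :
    x - σ ∈ B.Pos ∩ U := by
  have hne : x ≠ σ := by
    rintro rfl
    have := (h.linearIndependent.eq_of_pair (s := 1) (t := 0) (by simpa using hab)).2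
    linarith
  exact h.mem_of_mem_root (R.sub_mem_of_inner_pos hx.1.1 h.left_mem.1.1 hne hxσ)
    (a := a - 1) (by rw [hab]; module) hb

theorem sub_mem_or_sub_mem (h : B.IsConeBasis U σ τ) {x : V} (hx : x ∈ B.Pos ∩ U) {a b : ℝ}
    (hab : x = a • σ + b • τ) (ha : 0 < a) (hb : 0 < b) :
    x - σ ∈ B.Pos ∩ U ∨ x - τ ∈ B.Pos ∩ U := by
  have hxx : ⟪x, x⟫ = a * ⟪x, σ⟫ + b * ⟪x, τ⟫ := by
    rw [← real_inner_smul_right, ← real_inner_smul_right, ← inner_add_right, ← hab]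
  have hpos := R.inner_self_pos hx.1.1
  rcases (by by_contra! h; nlinarith : 0 < ⟪x, σ⟫ ∨ 0 < ⟪x, τ⟫) with hσ | hτ
  · exact .inl (h.sub_mem_of_inner_pos hx hab hb hσ)
  · exact .inr (h.symm.sub_mem_of_inner_pos hx (by rw [hab, add_comm]) ha hτ)

theorem exists_nat (h : B.IsConeBasis U σ τ) {x : V} (hx : x ∈ B.Pos ∩ U) :
    ∃ p q : ℕ, x = (p : ℝ) • σ + (q : ℝ) • τ := by
  suffices ∀ n : ℕ, ∀ x ∈ B.Pos ∩ U, ∀ a b : ℝ, 0 ≤ a → 0 ≤ b → x = a • σ + b • τ →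
      a + b ≤ n → ∃ p q : ℕ, x = (p : ℝ) • σ + (q : ℝ) • τ by
    obtain ⟨a, b, ha, hb, hab⟩ := h.exists_nonneg x hx
    exact this _ x hx a b ha hb hab (Nat.le_ceil _)
  intro n
  induction n with
  | zero =>
    intro x hx a b ha hb hab hn
    obtain ⟨rfl, rfl⟩ : a = 0 ∧ b = 0 := by push_cast at hn; constructor <;> linarith
    exact absurd (by simpa using hab) (R.nonzero x hx.1.1)
  | succ n ih =>
    intro x hx a b ha hb hab hn
    rcases ha.eq_or_lt with rfl | ha
    · have : b = 1 := R.eq_one_of_smul_mem h.right_mem.1.1 (by simpa [hab] using hx.1.1) hb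
      exact ⟨0, 1, by simp [hab, this]⟩
    rcases hb.eq_or_lt with rfl | hb
    · have : a = 1 := R.eq_one_of_smul_mem h.left_mem.1.1 (by simpa [hab] using hx.1.1) ha.le
      exact ⟨1, 0, by simp [hab, this]⟩
    push_cast at hn
    rcases h.sub_mem_or_sub_mem hx hab ha hb with hσ | hτ
    · have hab' : x - σ = (a - 1) • σ + b • τ := by rw [hab]; module
      obtain ⟨p, q, hpq⟩ :=
        ih _ hσ _ _ (h.coeff_nonneg hσ hab').1 hb.le hab' (by linarith)
      exact ⟨p + 1, q, by rw [← sub_add_cancel x σ, hpq]; push_cast; module⟩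
    · have hab' : x - τ = a • σ + (b - 1) • τ := by rw [hab]; module
      obtain ⟨p, q, hpq⟩ :=
        ih _ hτ _ _ ha.le (h.coeff_nonneg hτ hab').2 hab' (by linarith)
      exact ⟨p, q + 1, by rw [← sub_add_cancel x τ, hpq]; push_cast; module⟩

-- `s_σ x = (-p - m q) σ + q τ` is again a positive root of `U`.
theorem reflection_bound (h : B.IsConeBasis U σ τ) {m : ℤ} (hm : m * ⟪σ, σ⟫ = 2 * ⟪σ, τ⟫)
    {x : V} (hx : x ∈ B.Pos ∩ U) {p q : ℕ} (hpq : x = (p : ℝ) • σ + (q : ℝ) • τ)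
    (hq : 1 ≤ q) :
    (p : ℤ) + m * q ≤ 0 ∧ ((p : ℤ) + m * q = 0 → q = 1) := by
  have hσ := h.left_mem.1.1
  obtain ⟨z, hz, hzmem⟩ := R.exists_int_sub_smul_mem hσ hx.1.1
  have hz' : (z : ℝ) = 2 * p + m * q := by
    refine mul_right_cancel₀ (R.inner_self_pos hσ).ne' ?_
    rw [hz, hpq, inner_add_right, real_inner_smul_right, real_inner_smul_right]
    linear_combination (-(q : ℝ)) * hm
  have hrefl : x - (z : ℝ) • σ = (-(p : ℝ) - m * q) • σ + (q : ℝ) • τ := by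
    rw [hpq, hz']
    module
  have hmem := h.mem_of_mem_root hzmem hrefl (by exact_mod_cast hq)
  have hcoeff := (h.coeff_nonneg hmem hrefl).1
  refine ⟨by exact_mod_cast (by linarith : (p : ℝ) + m * q ≤ 0), fun heq => ?_⟩
  have hzero : -(p : ℝ) - m * q = 0 := by
    have : ((p : ℤ) : ℝ) + m * (q : ℤ) = 0 := by exact_mod_cast heq
    push_cast at this
    linarith
  rw [hzero, zero_smul, zero_add] at hrefl
  exact_mod_cast R.eq_one_of_smul_mem h.right_mem.1.1 (hrefl ▸ hzmem) (Nat.cast_nonneg q)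

theorem inner_pos (h : B.IsConeBasis U σ τ) {x y : V} (hx : x ∈ B.Pos ∩ U)
    (hy : y ∈ B.Pos ∩ U) {p q p' q' : ℕ} (hxpq : x = (p : ℝ) • σ + (q : ℝ) • τ)
    (hypq : y = (p' : ℝ) • σ + (q' : ℝ) • τ) (hq : 1 ≤ q) (hpp' : p' < p) (hqq' : q < q') :
    0 < ⟪x, y⟫ := by
  have hσ := h.left_mem.1.1
  have hτ := h.right_mem.1.1
  obtain ⟨m, hm, -⟩ := R.exists_int_sub_smul_mem hσ hτ
  obtain ⟨n, hn, -⟩ := R.exists_int_sub_smul_mem hτ hσ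
  have hn' : (n : ℝ) * ⟪τ, τ⟫ = 2 * ⟪σ, τ⟫ := by rwa [real_inner_comm σ τ] at hn
  have hp' : 1 ≤ p' := by
    by_contra! hp'
    obtain rfl : p' = 0 := by omega
    have : (q' : ℝ) = 1 :=
      R.eq_one_of_smul_mem hτ (by simpa [hypq] using hy.1.1) (Nat.cast_nonneg _)
    norm_cast at this
    omega
  obtain ⟨hσb, hσeq⟩ := h.reflection_bound hm hx hxpq hq
  obtain ⟨hτb, hτeq⟩ := h.symm.reflection_bound hn hy (by rw [hypq, add_comm]) hp'
  obtain ⟨hm1, hneg⟩ := cartan_pairing_neg (cartan_mul_lt_four h.linearIndependent hm hn')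
    (by exact_mod_cast hp') (by exact_mod_cast hpp') (by exact_mod_cast hq)
    (by exact_mod_cast hqq') hσb (fun h0 => by exact_mod_cast hσeq h0) hτb
    (fun h0 => by exact_mod_cast hτeq h0)
  have hC : ⟪σ, τ⟫ < 0 := by
    have : (m : ℝ) ≤ -1 := by exact_mod_cast hm1
    nlinarith [R.inner_self_pos hσ]
  have hX : (2 * n * p * p' + 2 * m * q * q' + m * n * (p * q' + p' * q) : ℝ) < 0 := by
    exact_mod_cast hneg
  have hmn := cartan_mul_inner_eq hm hn' (p : ℝ) q p' q'
  rw [← hxpq, ← hypq] at hmn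
  have hmn_pos : (0 : ℝ) < m * n := by
    have : 0 < m * n := by nlinarith
    exact_mod_cast this
  exact pos_of_mul_pos_right (hmn ▸ mul_pos_of_neg_of_neg hC hX) hmn_pos.le

theorem rle_or_rle (h : B.IsConeBasis U σ τ) {x y : V} (hx : x ∈ B.Pos ∩ U)
    (hy : y ∈ B.Pos ∩ U) {p q p' q' : ℕ} (hxpq : x = (p : ℝ) • σ + (q : ℝ) • τ)
    (hypq : y = (p' : ℝ) • σ + (q' : ℝ) • τ) (hq : 1 ≤ q) (hq' : 1 ≤ q') :
    B.rle x y ∨ B.rle y x := by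
  have hle : ∀ {x y : V} {p q p' q' : ℕ}, x = (p : ℝ) • σ + (q : ℝ) • τ →
      y = (p' : ℝ) • σ + (q' : ℝ) • τ → p ≤ p' → q ≤ q' → B.rle x y := by
    rintro x y p q p' q' rfl rfl hp hq j
    simp only [map_add, map_smul, Finsupp.coe_add, Finsupp.coe_smul, Pi.add_apply,
      Pi.smul_apply, smul_eq_mul]
    gcongr
    exacts [h.left_mem.1.2 j, h.right_mem.1.2 j]
  by_contra! hinc
  have hnonpos := B.inner_nonpos_of_not_rle hx.1.1 hy.1.1 hinc.1 hinc.2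
  have h1 : ¬(p ≤ p' ∧ q ≤ q') := fun hpq => hinc.1 (hle hxpq hypq hpq.1 hpq.2)
  have h2 : ¬(p' ≤ p ∧ q' ≤ q) := fun hpq => hinc.2 (hle hypq hxpq hpq.1 hpq.2)
  rcases (by omega : (p' < p ∧ q < q') ∨ (p < p' ∧ q' < q)) with ⟨hp, hqq⟩ | ⟨hp, hqq⟩
  · exact (h.inner_pos hx hy hxpq hypq hq hp hqq).not_ge hnonpos
  · exact (h.inner_pos hy hx hypq hxpq hq' hp hqq).not_ge (real_inner_comm x y ▸ hnonpos)

end IsConeBasis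

theorem one_le_coord_of_mem_span {γ γ' δ : V} (i : ι) (hγ : B.IsPos γ) (hγ' : B.IsPos γ')
    (hγi : 1 ≤ B.b.repr γ i) (hγ'i : 1 ≤ B.b.repr γ' i) (hγγ' : ¬B.rle γ γ')
    (hγ'γ : ¬B.rle γ' γ) (hδ : B.IsPos δ) (hδU : δ ∈ Submodule.span ℝ {γ, γ'}) :
    1 ≤ B.b.repr δ i := by
  set U := Submodule.span ℝ ({γ, γ'} : Set V)
  have hγU : γ ∈ B.Pos ∩ U := ⟨hγ, Submodule.subset_span (by simp)⟩
  have hγ'U : γ' ∈ B.Pos ∩ U := ⟨hγ', Submodule.subset_span (by simp)⟩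
  refine (B.coord_eq_zero_or_one_le hδ i).resolve_left fun hδi => ?_
  have hU := finrank_span_pair_eq_two (B.linearIndependent_of_not_rle hγ hγγ' hγ'γ)
  obtain ⟨τ, hcone⟩ := B.exists_isConeBasis hU i ⟨hδ, hδU⟩ hδi hγU (by linarith)
  have hcoeff : ∀ {x : V} {p q : ℕ}, x = (p : ℝ) • δ + (q : ℝ) • τ →
      1 ≤ B.b.repr x i → 1 ≤ q := by
    rintro x p q rfl hx
    by_contra! hq
    obtain rfl : q = 0 := by omega
    simp [hδi] at hx
    linarith
  obtain ⟨p, q, hpq⟩ := hcone.exists_nat hγU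
  obtain ⟨p', q', hpq'⟩ := hcone.exists_nat hγ'U
  rcases hcone.rle_or_rle hγU hγ'U hpq hpq' (hcoeff hpq hγi) (hcoeff hpq' hγ'i) with h | h
  exacts [hγγ' h, hγ'γ h]

end RootBase

theorem filter_incomparable_flat_general {V : Type*} [NormedAddCommGroup V] [InnerProductSpace ℝ V]
    {ι : Type*} [Fintype ι] (R : RootSystemData V) (B : RootBase R ι)
    (I : Set V) (hI : I ⊆ B.Pos)
    (i : ι) (F : Set V) (hF : F = {γ ∈ I | B.rle (B.b i) γ})
    (hinc : ∃ γ ∈ F, ∃ γ' ∈ F, ¬ B.rle γ γ' ∧ ¬ B.rle γ' γ) :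
    ∃ γ ∈ F, ∃ γ' ∈ F,
      Module.finrank ℝ (Submodule.span ℝ ({γ, γ'} : Set V)) = 2 ∧
      I ∩ (Submodule.span ℝ ({γ, γ'} : Set V) : Set V) ⊆ F := by
  subst hF
  obtain ⟨γ, ⟨hγI, hγi⟩, γ', ⟨hγ'I, hγ'i⟩, hγγ', hγ'γ⟩ := hinc
  have hγ : B.IsPos γ := hI hγI
  have hγ' : B.IsPos γ' := hI hγ'I
  refine ⟨γ, ⟨hγI, hγi⟩, γ', ⟨hγ'I, hγ'i⟩,
    finrank_span_pair_eq_two (B.linearIndependent_of_not_rle hγ hγγ' hγ'γ), ?_⟩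
  rintro δ ⟨hδI, hδU⟩
  have hδ : B.IsPos δ := hI hδI
  refine ⟨hδI, (B.rle_basis_iff hδ i).2 ?_⟩
  exact B.one_le_coord_of_mem_span i hγ hγ' ((B.rle_basis_iff hγ i).1 hγi)
    ((B.rle_basis_iff hγ' i).1 hγ'i) hγγ' hγ'γ hδ hδU

/-- If the order filter of an ideal I generated by a simple root contains two incomparable
elements, then it contains an entire 2-flat of I. -/
theorem filter_incomparable_flat {V : Type*} [NormedAddCommGroup V] [InnerProductSpace ℝ V]
    {ι : Type*} [Fintype ι] (R : RootSystemData V) (B : RootBase R ι)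
    (I : Set V) (hI : I ⊆ B.Pos)
    (hideal : ∀ γ ∈ I, ∀ δ, B.IsPos δ → B.rle δ γ → δ ∈ I)
    (i : ι) (F : Set V) (hF : F = {γ ∈ I | B.rle (B.b i) γ})
    (hinc : ∃ γ ∈ F, ∃ γ' ∈ F, ¬ B.rle γ γ' ∧ ¬ B.rle γ' γ) :
    ∃ γ ∈ F, ∃ γ' ∈ F,
      Module.finrank ℝ (Submodule.span ℝ ({γ, γ'} : Set V)) = 2 ∧
      I ∩ (Submodule.span ℝ ({γ, γ'} : Set V) : Set V) ⊆ F :=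
  filter_incomparable_flat_general R B I hI i F hF hinc
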